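/- Let ε₁, ε₂ ∈ [0, 1/2) and suppose (1 − H(ε₁))/2 < 1 − H(ε₂). Then there exists a unique p* ∈ (0, 1/2) such that (1 − H(ε₁))·(1 − p*) = H(ε₂·(1 − 2p*) + p*) − H(ε₂); moreover the maximum over p ∈ [0,1] of min( (1 − H(ε₁))·(1 − p) , H(ε₂·(1 − 2p) + p) − H(ε₂) ) equals (1 − H(ε₁))·(1 − p*) and is attained at p = p*. Here H denotes the binary entropy function H(x) = −x·log₂(x) − (1 − x)·log₂(1 − x) for x ∈ [0,1], with the convention 0·log₂0 = 0. -/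

import Mathlib

/-!
With `A = 1 - H(ε₁) > 0`, the source–relay rate `A (1 - p)` is strictly decreasing in `p`, while
the relay–destination rate `H(ε₂ ⋆ p) - H(ε₂)` is nondecreasing on `[0, 1/2]`, since
`ε₂ ⋆ p = ε₂ (1 - 2p) + p` moves monotonically from `ε₂` to `1/2`. Their difference is therefore
strictly decreasing and continuous on `[0, 1/2]`; it is positive at `0` and, by the hypothesis
`A / 2 < 1 - H(ε₂)`, negative at `1/2`, so it has exactly one zero `p*`. Left of `p*` the minimum
is bounded by the increasing curve, right of `p*` by the decreasing one, so both bounds are the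
common value at `p*`.
-/

/-- The binary entropy function `H(x) = −x·log₂ x − (1 − x)·log₂(1 − x)`
(with the convention `0·log₂ 0 = 0`, automatic since `Real.logb 2 0 = 0`). -/
noncomputable def binEnt (x : ℝ) : ℝ :=
  -(x * Real.logb 2 x) - (1 - x) * Real.logb 2 (1 - x)

open Set

lemma binEnt_eq_binEntropy_div (x : ℝ) : binEnt x = Real.binEntropy x / Real.log 2 := by
  rw [binEnt, Real.binEntropy, Real.log_inv, Real.log_inv, Real.logb, Real.logb]
  ring

@[fun_prop]
lemma continuous_binEnt : Continuous binEnt := by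
  simp only [funext binEnt_eq_binEntropy_div]
  fun_prop

lemma binEnt_monotoneOn : MonotoneOn binEnt (Icc 0 2⁻¹) := by
  intro a ha b hb hab
  simp only [binEnt_eq_binEntropy_div]
  gcongr
  exact Real.binEntropy_strictMonoOn.monotoneOn ha hb hab

lemma binEnt_two_inv : binEnt 2⁻¹ = 1 := by
  rw [binEnt_eq_binEntropy_div, Real.binEntropy_two_inv, div_self (Real.log_pos one_lt_two).ne']

lemma binEnt_lt_one {x : ℝ} (hx : x ≠ 2⁻¹) : binEnt x < 1 := by
  rw [binEnt_eq_binEntropy_div, div_lt_one (Real.log_pos one_lt_two)]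
  exact Real.binEntropy_lt_log_two.2 hx

lemma binEnt_cascade_monotoneOn {ε : ℝ} (hε : ε ∈ Icc (0 : ℝ) (1 / 2)) :
    MonotoneOn (fun p => binEnt (ε * (1 - 2 * p) + p)) (Icc 0 (1 / 2)) := by
  obtain ⟨hε0, hε1⟩ := hε
  refine binEnt_monotoneOn.comp (fun a _ b _ hab => by nlinarith) fun p ⟨hp0, hp1⟩ => ?_
  constructor <;> nlinarith

lemma existsUnique_zero_of_strictAntiOn {F : ℝ → ℝ} {a b : ℝ} (hab : a ≤ b)
    (hcont : ContinuousOn F (Icc a b)) (hanti : StrictAntiOn F (Icc a b))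
    (ha : 0 < F a) (hb : F b < 0) :
    ∃ x ∈ Ioo a b, F x = 0 ∧ ∀ y ∈ Ioo a b, F y = 0 → y = x := by
  obtain ⟨x, hx, hFx⟩ := intermediate_value_Ioo' hab hcont ⟨hb, ha⟩
  refine ⟨x, hx, hFx, fun y hy hFy => ?_⟩
  exact hanti.injOn (Ioo_subset_Icc_self hy) (Ioo_subset_Icc_self hx) (hFy.trans hFx.symm)

lemma min_le_of_crossing {f g : ℝ → ℝ} {a x : ℝ} (hf : AntitoneOn f (Ici x))
    (hg : MonotoneOn g (Icc a x)) (hfg : f x = g x) {p : ℝ} (hp : a ≤ p) :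
    min (f p) (g p) ≤ f x := by
  rcases le_total p x with hpx | hxp
  · exact (min_le_right _ _).trans (hfg ▸ hg ⟨hp, hpx⟩ ⟨hp.trans hpx, le_rfl⟩ hpx)
  · exact (min_le_left _ _).trans (hf self_mem_Ici hxp hxp)

/-- First case of Corollary 1: for BSC links with crossover probabilities
`ε₁, ε₂ ∈ [0,1/2)`, if `(1 − H(ε₁))/2 < 1 − H(ε₂)`, then there is a unique
`p* ∈ (0,1/2)` with `(1 − H(ε₁))·(1 − p*) = H(ε₂·(1 − 2p*) + p*) − H(ε₂)`, and the
maximum over `p ∈ [0,1]` of `min((1 − H(ε₁))·(1 − p), H(ε₂·(1 − 2p) + p) − H(ε₂))`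
equals `(1 − H(ε₁))·(1 − p*)`, attained at `p = p*`. -/
theorem stmt_10 (ε₁ ε₂ : ℝ) (hε₁ : ε₁ ∈ Set.Ico (0 : ℝ) (1 / 2))
    (hε₂ : ε₂ ∈ Set.Ico (0 : ℝ) (1 / 2))
    (hcond : (1 - binEnt ε₁) / 2 < 1 - binEnt ε₂) :
    ∃ p' ∈ Set.Ioo (0 : ℝ) (1 / 2),
      (1 - binEnt ε₁) * (1 - p') = binEnt (ε₂ * (1 - 2 * p') + p') - binEnt ε₂ ∧
      (∀ q ∈ Set.Ioo (0 : ℝ) (1 / 2),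
        (1 - binEnt ε₁) * (1 - q) = binEnt (ε₂ * (1 - 2 * q) + q) - binEnt ε₂ →
          q = p') ∧
      (∀ p ∈ Set.Icc (0 : ℝ) 1,
        min ((1 - binEnt ε₁) * (1 - p)) (binEnt (ε₂ * (1 - 2 * p) + p) - binEnt ε₂) ≤
          (1 - binEnt ε₁) * (1 - p')) ∧
      min ((1 - binEnt ε₁) * (1 - p'))
          (binEnt (ε₂ * (1 - 2 * p') + p') - binEnt ε₂) =
        (1 - binEnt ε₁) * (1 - p') := by
  set A := 1 - binEnt ε₁
  have hA : 0 < A := sub_pos.2 (binEnt_lt_one (by rintro rfl; norm_num at hε₁))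
  set f : ℝ → ℝ := fun p => A * (1 - p)
  set g : ℝ → ℝ := fun p => binEnt (ε₂ * (1 - 2 * p) + p) - binEnt ε₂
  have hf : StrictAnti f := fun a b hab => by simp only [f]; nlinarith
  have hg : MonotoneOn g (Icc 0 (1 / 2)) := fun a ha b hb hab =>
    sub_le_sub_right (binEnt_cascade_monotoneOn (Ico_subset_Icc_self hε₂) ha hb hab) _
  have hg_half : g (1 / 2) = 1 - binEnt ε₂ := by simp [g, binEnt_two_inv]
  have hanti : StrictAntiOn (f - g) (Icc 0 (1 / 2)) := fun a ha b hb hab => by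
    simp only [Pi.sub_apply]
    linarith [hf hab, hg ha hb hab.le]
  obtain ⟨p', hp', hcross, huniq⟩ :=
    existsUnique_zero_of_strictAntiOn (by norm_num) (by fun_prop) hanti
      (by simpa [f, g] using hA) (by simp only [Pi.sub_apply, hg_half, f]; linarith)
  have hfg : f p' = g p' := sub_eq_zero.1 hcross
  refine ⟨p', hp', hfg, fun q hq hfgq => huniq q hq (sub_eq_zero.2 hfgq),
    fun p hp => min_le_of_crossing (hf.antitone.antitoneOn _)
      (hg.mono (Icc_subset_Icc_right hp'.2.le)) hfg hp.1, ?_⟩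
  exact min_eq_left hfg.le
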